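/- The graceful chromatic number of the closed ladder L_3 equals 5. -/
import Mathlib


/-- A graceful `k`-coloring of `G`: a proper vertex coloring with colors in
`{1, ..., k}` whose induced edge coloring `f*(uv) = |f u - f v|` is a proper
edge coloring. -/
def IsGracefulColoring {V : Type*} (G : SimpleGraph V) (k : ℕ) (f : V → ℕ) : Prop :=
  (∀ v, 1 ≤ f v ∧ f v ≤ k) ∧
  (∀ ⦃u v⦄, G.Adj u v → f u ≠ f v) ∧
  (∀ ⦃u v w⦄, G.Adj u v → G.Adj u w → v ≠ w →
    ((f u : ℤ) - f v).natAbs ≠ ((f u : ℤ) - f w).natAbs)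

/-- The graceful chromatic number: the least `k` admitting a graceful `k`-coloring. -/
noncomputable def gracefulChromaticNumber {V : Type*} (G : SimpleGraph V) : ℕ :=
  sInf {k | ∃ f : V → ℕ, IsGracefulColoring G k f}

/-- The closed ladder `L_n`: vertices `(r, i)` with rows `r = 0` (the `x_i`) and
`r = 1` (the `y_i`); rail edges `x_i x_{i+1}`, `y_i y_{i+1}` and rung edges `x_i y_i`. -/
def closedLadder (n : ℕ) : SimpleGraph (Fin 2 × Fin n) :=
  SimpleGraph.fromRel (fun a b =>
    (a.1 = b.1 ∧ a.2.val + 1 = b.2.val) ∨ (a.2 = b.2 ∧ a.1 ≠ b.1))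

/-- Decidable version of adjacency in `closedLadder n`. -/
def ladderRel (n : ℕ) (a b : Fin 2 × Fin n) : Prop :=
  a ≠ b ∧ (((a.1 = b.1 ∧ a.2.val + 1 = b.2.val) ∨ (a.2 = b.2 ∧ a.1 ≠ b.1)) ∨
    ((b.1 = a.1 ∧ b.2.val + 1 = a.2.val) ∨ (b.2 = a.2 ∧ b.1 ≠ a.1)))

instance (n : ℕ) (a b : Fin 2 × Fin n) : Decidable (ladderRel n a b) := by
  unfold ladderRel; infer_instance

lemma closedLadder_adj_iff (n : ℕ) (a b : Fin 2 × Fin n) :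
    (closedLadder n).Adj a b ↔ ladderRel n a b := by
  simp [closedLadder, SimpleGraph.fromRel_adj, ladderRel]

def D (x y : Fin 4) : ℕ := max x.val y.val - min x.val y.val

set_option synthInstance.maxSize 2000 in
set_option synthInstance.maxHeartbeats 1000000 in
set_option maxHeartbeats 2000000 in
lemma no_four : ∀ a0 a1 a2 a3 a4 a5 : Fin 4,
    a0 ≠ a1 → a1 ≠ a2 → a3 ≠ a4 → a4 ≠ a5 → a0 ≠ a3 → a1 ≠ a4 → a2 ≠ a5 →
    ¬ (D a0 a1 ≠ D a0 a3 ∧ D a1 a0 ≠ D a1 a2 ∧ D a1 a0 ≠ D a1 a4 ∧ D a1 a2 ≠ D a1 a4 ∧ D a2 a1 ≠ D a2 a5 ∧ D a3 a4 ≠ D a3 a0 ∧ D a4 a3 ≠ D a4 a5 ∧ D a4 a3 ≠ D a4 a1 ∧ D a4 a5 ≠ D a4 a1 ∧ D a5 a4 ≠ D a5 a2) := by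
  decide

def f5 : Fin 2 × Fin 3 → ℕ := fun p =>
  if p.1 = 0 then (if p.2 = 0 then 1 else if p.2 = 1 then 2 else 4)
  else (if p.2 = 0 then 4 else if p.2 = 1 then 5 else 1)

lemma f5_graceful : IsGracefulColoring (closedLadder 3) 5 f5 := by
  refine ⟨?_, ?_, ?_⟩
  · decide
  · intro u v huv
    rw [closedLadder_adj_iff] at huv
    revert huv; revert u v; decide
  · intro u v w huv huw hvw
    rw [closedLadder_adj_iff] at huv huw
    revert huv huw hvw; revert u v w; decide

lemma bridge2 (x y : ℕ) (h1 : 1 ≤ x) (h2 : 1 ≤ y) (hp : x ≠ y) : ¬ (x - 1 = y - 1) := by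
  omega

lemma bridge (x y z : ℕ) (h1 : 1 ≤ x) (h2 : 1 ≤ y) (h3 : 1 ≤ z)
    (he : ((x:ℤ) - y).natAbs ≠ ((x:ℤ) - z).natAbs) :
    max (x-1) (y-1) - min (x-1) (y-1) ≠ max (x-1) (z-1) - min (x-1) (z-1) := by
  omega

set_option maxHeartbeats 2000000 in
lemma key (b0 b1 b2 b3 b4 b5 : ℕ)
    (hb0 : 1 ≤ b0 ∧ b0 ≤ 4) (hb1 : 1 ≤ b1 ∧ b1 ≤ 4) (hb2 : 1 ≤ b2 ∧ b2 ≤ 4) (hb3 : 1 ≤ b3 ∧ b3 ≤ 4) (hb4 : 1 ≤ b4 ∧ b4 ≤ 4) (hb5 : 1 ≤ b5 ∧ b5 ≤ 4)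
    (hp0 : b0 ≠ b1) (hp1 : b1 ≠ b2) (hp2 : b3 ≠ b4) (hp3 : b4 ≠ b5) (hp4 : b0 ≠ b3) (hp5 : b1 ≠ b4) (hp6 : b2 ≠ b5)
    (he0 : ((b0:ℤ) - b1).natAbs ≠ ((b0:ℤ) - b3).natAbs)
    (he1 : ((b1:ℤ) - b0).natAbs ≠ ((b1:ℤ) - b2).natAbs)
    (he2 : ((b1:ℤ) - b0).natAbs ≠ ((b1:ℤ) - b4).natAbs)
    (he3 : ((b1:ℤ) - b2).natAbs ≠ ((b1:ℤ) - b4).natAbs)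
    (he4 : ((b2:ℤ) - b1).natAbs ≠ ((b2:ℤ) - b5).natAbs)
    (he5 : ((b3:ℤ) - b4).natAbs ≠ ((b3:ℤ) - b0).natAbs)
    (he6 : ((b4:ℤ) - b3).natAbs ≠ ((b4:ℤ) - b5).natAbs)
    (he7 : ((b4:ℤ) - b3).natAbs ≠ ((b4:ℤ) - b1).natAbs)
    (he8 : ((b4:ℤ) - b5).natAbs ≠ ((b4:ℤ) - b1).natAbs)
    (he9 : ((b5:ℤ) - b4).natAbs ≠ ((b5:ℤ) - b2).natAbs)
    : False := by
  apply no_four ⟨b0 - 1, by omega⟩ ⟨b1 - 1, by omega⟩ ⟨b2 - 1, by omega⟩ ⟨b3 - 1, by omega⟩ ⟨b4 - 1, by omega⟩ ⟨b5 - 1, by omega⟩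
  · simp only [ne_eq, Fin.mk.injEq]
    exact bridge2 _ _ hb0.1 hb1.1 hp0
  · simp only [ne_eq, Fin.mk.injEq]
    exact bridge2 _ _ hb1.1 hb2.1 hp1
  · simp only [ne_eq, Fin.mk.injEq]
    exact bridge2 _ _ hb3.1 hb4.1 hp2
  · simp only [ne_eq, Fin.mk.injEq]
    exact bridge2 _ _ hb4.1 hb5.1 hp3
  · simp only [ne_eq, Fin.mk.injEq]
    exact bridge2 _ _ hb0.1 hb3.1 hp4
  · simp only [ne_eq, Fin.mk.injEq]
    exact bridge2 _ _ hb1.1 hb4.1 hp5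
  · simp only [ne_eq, Fin.mk.injEq]
    exact bridge2 _ _ hb2.1 hb5.1 hp6
  refine ⟨?_, ?_, ?_, ?_, ?_, ?_, ?_, ?_, ?_, ?_⟩
  · simp only [D, Fin.val_mk]
    exact bridge _ _ _ hb0.1 hb1.1 hb3.1 he0
  · simp only [D, Fin.val_mk]
    exact bridge _ _ _ hb1.1 hb0.1 hb2.1 he1
  · simp only [D, Fin.val_mk]
    exact bridge _ _ _ hb1.1 hb0.1 hb4.1 he2
  · simp only [D, Fin.val_mk]
    exact bridge _ _ _ hb1.1 hb2.1 hb4.1 he3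
  · simp only [D, Fin.val_mk]
    exact bridge _ _ _ hb2.1 hb1.1 hb5.1 he4
  · simp only [D, Fin.val_mk]
    exact bridge _ _ _ hb3.1 hb4.1 hb0.1 he5
  · simp only [D, Fin.val_mk]
    exact bridge _ _ _ hb4.1 hb3.1 hb5.1 he6
  · simp only [D, Fin.val_mk]
    exact bridge _ _ _ hb4.1 hb3.1 hb1.1 he7
  · simp only [D, Fin.val_mk]
    exact bridge _ _ _ hb4.1 hb5.1 hb1.1 he8
  · simp only [D, Fin.val_mk]
    exact bridge _ _ _ hb5.1 hb4.1 hb2.1 he9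

set_option maxHeartbeats 2000000 in
theorem gracefulChromaticNumber_closedLadder_three :
    gracefulChromaticNumber (closedLadder 3) = 5 := by
  have h5 : 5 ∈ {k | ∃ f : Fin 2 × Fin 3 → ℕ, IsGracefulColoring (closedLadder 3) k f} :=
    ⟨f5, f5_graceful⟩
  have hlt : ∀ k, k ∈ {k | ∃ f : Fin 2 × Fin 3 → ℕ, IsGracefulColoring (closedLadder 3) k f} →
      5 ≤ k := by
    intro k hk
    by_contra hcon
    push_neg at hcon
    obtain ⟨f, hbd, hprop, hedge⟩ := hk
    have hA0 : (closedLadder 3).Adj ((0:Fin 2), (0:Fin 3)) ((0:Fin 2), (1:Fin 3)) := by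
      rw [closedLadder_adj_iff]; decide
    have hA1 : (closedLadder 3).Adj ((0:Fin 2), (1:Fin 3)) ((0:Fin 2), (2:Fin 3)) := by
      rw [closedLadder_adj_iff]; decide
    have hA2 : (closedLadder 3).Adj ((1:Fin 2), (0:Fin 3)) ((1:Fin 2), (1:Fin 3)) := by
      rw [closedLadder_adj_iff]; decide
    have hA3 : (closedLadder 3).Adj ((1:Fin 2), (1:Fin 3)) ((1:Fin 2), (2:Fin 3)) := by
      rw [closedLadder_adj_iff]; decide
    have hA4 : (closedLadder 3).Adj ((0:Fin 2), (0:Fin 3)) ((1:Fin 2), (0:Fin 3)) := by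
      rw [closedLadder_adj_iff]; decide
    have hA5 : (closedLadder 3).Adj ((0:Fin 2), (1:Fin 3)) ((1:Fin 2), (1:Fin 3)) := by
      rw [closedLadder_adj_iff]; decide
    have hA6 : (closedLadder 3).Adj ((0:Fin 2), (2:Fin 3)) ((1:Fin 2), (2:Fin 3)) := by
      rw [closedLadder_adj_iff]; decide
    exact key (f ((0:Fin 2), (0:Fin 3)))
      (f ((0:Fin 2), (1:Fin 3)))
      (f ((0:Fin 2), (2:Fin 3)))
      (f ((1:Fin 2), (0:Fin 3)))
      (f ((1:Fin 2), (1:Fin 3)))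
      (f ((1:Fin 2), (2:Fin 3)))
      ⟨(hbd ((0:Fin 2), (0:Fin 3))).1, le_trans (hbd ((0:Fin 2), (0:Fin 3))).2 (by omega)⟩
      ⟨(hbd ((0:Fin 2), (1:Fin 3))).1, le_trans (hbd ((0:Fin 2), (1:Fin 3))).2 (by omega)⟩
      ⟨(hbd ((0:Fin 2), (2:Fin 3))).1, le_trans (hbd ((0:Fin 2), (2:Fin 3))).2 (by omega)⟩
      ⟨(hbd ((1:Fin 2), (0:Fin 3))).1, le_trans (hbd ((1:Fin 2), (0:Fin 3))).2 (by omega)⟩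
      ⟨(hbd ((1:Fin 2), (1:Fin 3))).1, le_trans (hbd ((1:Fin 2), (1:Fin 3))).2 (by omega)⟩
      ⟨(hbd ((1:Fin 2), (2:Fin 3))).1, le_trans (hbd ((1:Fin 2), (2:Fin 3))).2 (by omega)⟩
      (hprop hA0)
      (hprop hA1)
      (hprop hA2)
      (hprop hA3)
      (hprop hA4)
      (hprop hA5)
      (hprop hA6)
      (hedge hA0 hA4 (by decide))
      (hedge hA0.symm hA1 (by decide))
      (hedge hA0.symm hA5 (by decide))
      (hedge hA1 hA5 (by decide))
      (hedge hA1.symm hA6 (by decide))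
      (hedge hA2 hA4.symm (by decide))
      (hedge hA2.symm hA3 (by decide))
      (hedge hA2.symm hA5.symm (by decide))
      (hedge hA3 hA5.symm (by decide))
      (hedge hA3.symm hA6.symm (by decide))
  unfold gracefulChromaticNumber
  apply le_antisymm
  · exact Nat.sInf_le h5
  · by_contra h
    push_neg at h
    have hmem := Nat.sInf_mem (⟨5, h5⟩ : Set.Nonempty _)
    exact absurd (hlt _ hmem) (by omega)
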